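/- Let k be a positive integer and let C be a binary extremal doubly even self-dual code of length 24k (i.e., C equals its dual, all weights are divisible by 4, and the minimum Hamming weight of C is 4k+4). Then the covering radius of C is at most 4k. -/

import Mathlib

/-!
Delsarte's bound: if every nonzero weight of a binary linear code `D` lies in a set `W` of
positive integers, then every vector is within distance `#W` of `D^⊥`. Otherwise some `v` is at
distance `> #W` from `D^⊥`; put `g = ∏_{w ∈ W} (X - w)`. Since `wt u = ∑ᵢ (1 - (-1)^{uᵢ}) / 2`,
the function `u ↦ g(wt u)` is a combination of characters `u ↦ (-1)^{z·u}` with `wt z ≤ #W`, and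
each `v + z` lies outside `D^⊥`, so `∑_{u ∈ D} (-1)^{v·u} g(wt u) = 0`. But only `u = 0`
contributes to this sum, which is therefore `g(0) ≠ 0`.

For a doubly even self-dual code `C = C^⊥` of length `24k` the all-ones vector lies in `C`, so
with minimum weight `4k + 4` every nonzero weight of `C` is `24k` or a multiple of `4` between
`4k + 4` and `20k - 4`: there are at most `4k` of them.
-/

open Finset

namespace Z4Note

variable {ι : Type*} [Fintype ι]

/-- Hamming weight of a binary vector. -/
def hWt (x : ι → ZMod 2) : ℕ := (Finset.univ.filter fun i => x i ≠ 0).card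

/-- Lee value of an element of `ZMod 4`:  0 ↦ 0, 1 ↦ 1, 2 ↦ 2, 3 ↦ 1. -/
def leeVal (a : ZMod 4) : ℕ := min a.val (4 - a.val)

/-- Lee weight `n₁(x) + 2 n₂(x) + n₃(x)`. -/
def leeWt (x : ι → ZMod 4) : ℕ := ∑ i, leeVal (x i)

/-- Euclidean weight `n₁(x) + 4 n₂(x) + n₃(x)`. -/
def eucWt (x : ι → ZMod 4) : ℕ := ∑ i, (leeVal (x i)) ^ 2

/-- Number of coordinates of `x` equal to `a`. -/
def nCount (a : ZMod 4) (x : ι → ZMod 4) : ℕ := (Finset.univ.filter fun i => x i = a).card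

/-- Dual of a `ZMod 4`-code (as a set), w.r.t. the standard inner product. -/
def dualZ4 (C : Set (ι → ZMod 4)) : Set (ι → ZMod 4) :=
  {x | ∀ y ∈ C, ∑ i, x i * y i = 0}

/-- Dual of a binary code (as a set), w.r.t. the standard inner product. -/
def dual2 (C : Set (ι → ZMod 2)) : Set (ι → ZMod 2) :=
  {x | ∀ y ∈ C, ∑ i, x i * y i = 0}

/-- A `ZMod 4`-code is self-dual if it equals its dual. -/
def SelfDualZ4 (C : Submodule (ZMod 4) (ι → ZMod 4)) : Prop :=
  (C : Set (ι → ZMod 4)) = dualZ4 (C : Set (ι → ZMod 4))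

/-- A binary code is self-dual if it equals its dual. -/
def SelfDual2 (D : Submodule (ZMod 2) (ι → ZMod 2)) : Prop :=
  (D : Set (ι → ZMod 2)) = dual2 (D : Set (ι → ZMod 2))

/-- Coordinatewise reduction modulo 2. -/
def res2 (x : ι → ZMod 4) : ι → ZMod 2 :=
  fun i => ZMod.castHom (by norm_num : (2:ℕ) ∣ 4) (ZMod 2) (x i)

/-- The residue code `C⁽¹⁾ = {c mod 2 : c ∈ C}`. -/
def residue (C : Set (ι → ZMod 4)) : Set (ι → ZMod 2) := res2 '' C

/-- Minimum Lee weight among nonzero codewords. -/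
noncomputable def minLee (C : Set (ι → ZMod 4)) : ℕ := sInf {d | ∃ x ∈ C, x ≠ 0 ∧ leeWt x = d}

/-- Minimum Euclidean weight among nonzero codewords. -/
noncomputable def minEuc (C : Set (ι → ZMod 4)) : ℕ := sInf {d | ∃ x ∈ C, x ≠ 0 ∧ eucWt x = d}

/-- Minimum Hamming weight among nonzero codewords of a binary code. -/
noncomputable def minHam (C : Set (ι → ZMod 2)) : ℕ := sInf {d | ∃ x ∈ C, x ≠ 0 ∧ hWt x = d}

/-- A binary code is doubly even if all weights are divisible by 4. -/
def DoublyEven (C : Set (ι → ZMod 2)) : Prop := ∀ x ∈ C, 4 ∣ hWt x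

/-- A binary code is singly even if some codeword has weight not divisible by 4. -/
def SinglyEven (C : Set (ι → ZMod 2)) : Prop := ∃ x ∈ C, ¬ 4 ∣ hWt x

/-- A self-dual `ZMod 4`-code is Type II if all Euclidean weights are divisible by 8. -/
def TypeII (C : Set (ι → ZMod 4)) : Prop := ∀ x ∈ C, 8 ∣ eucWt x

/-- The doubly even subcode of a binary code. -/
def evenSubcode (D : Set (ι → ZMod 2)) : Set (ι → ZMod 2) := {x ∈ D | 4 ∣ hWt x}

/-- The shadow `S = D₀^⊥ \ D` of a binary code. -/
def shadow (D : Set (ι → ZMod 2)) : Set (ι → ZMod 2) := dual2 (evenSubcode D) \ D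

/-- A binary singly even self-dual code is s-extremal if equality holds in the
Bachoc–Gaborit bound relating the minimum weight of the code and of its shadow. -/
def SExtremal (D : Submodule (ZMod 2) (ι → ZMod 2)) : Prop :=
  SelfDual2 D ∧ SinglyEven (D : Set (ι → ZMod 2)) ∧
  ((¬ (Fintype.card ι % 24 = 22 ∧
        minHam (D : Set (ι → ZMod 2)) = 4 * (Fintype.card ι / 24) + 6)) →
      minHam (shadow (D : Set (ι → ZMod 2))) + 2 * minHam (D : Set (ι → ZMod 2)) =
        Fintype.card ι / 2 + 4) ∧
  ((Fintype.card ι % 24 = 22 ∧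
        minHam (D : Set (ι → ZMod 2)) = 4 * (Fintype.card ι / 24) + 6) →
      minHam (shadow (D : Set (ι → ZMod 2))) + 2 * minHam (D : Set (ι → ZMod 2)) =
        Fintype.card ι / 2 + 8)

/-- Equivalence of `ZMod 4`-codes: coordinate permutation together with sign changes. -/
def Z4Equiv (C C' : Set (ι → ZMod 4)) : Prop :=
  ∃ σ : Equiv.Perm ι, ∃ ε : ι → ZMod 4, (∀ i, ε i = 1 ∨ ε i = -1) ∧
    C' = (fun x => fun i => ε i * x (σ i)) '' C

/-- Covering radius of a binary code. -/
noncomputable def covRad (C : Set (ι → ZMod 2)) : ℕ :=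
  sInf {R | ∀ v : ι → ZMod 2, ∃ c ∈ C, hWt (v - c) ≤ R}

/-- Entry `(i,j)` of the circulant matrix with first row `r`. -/
def circEntry {m : ℕ} (r : Fin m → ZMod 4) (i j : Fin m) : ZMod 4 := r (j - i)

/-- Entry `(i,j)` of the negacirculant matrix with first row `r`. -/
def negaEntry {m : ℕ} (r : Fin m → ZMod 4) (i j : Fin m) : ZMod 4 :=
  if i.val ≤ j.val then r (j - i) else - r (j - i)

/-- The bordered part `B` of the generator matrix of a bordered double circulant code. -/
def bdcB {m : ℕ} (α β γ : ZMod 4) (r : Fin m → ZMod 4) :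
    Fin (m+1) → Fin (m+1) → ZMod 4 :=
  Fin.cases (Fin.cases α fun _ => β) (fun i' => Fin.cases γ fun j' => circEntry r i' j')

/-- Row `i` of the generator matrix `(I | B)` of a bordered double circulant code. -/
def bdcRow {m : ℕ} (α β γ : ZMod 4) (r : Fin m → ZMod 4) (i : Fin (m+1)) :
    (Fin (m+1) ⊕ Fin (m+1)) → ZMod 4 :=
  Sum.elim (fun j => if j = i then 1 else 0) (bdcB α β γ r i)

/-- The bordered double circulant code of length `2(m+1)`. -/
def bdcCode {m : ℕ} (α β γ : ZMod 4) (r : Fin m → ZMod 4) :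
    Submodule (ZMod 4) ((Fin (m+1) ⊕ Fin (m+1)) → ZMod 4) :=
  Submodule.span (ZMod 4) (Set.range (bdcRow α β γ r))

/-- The block matrix `[[A, B], [-Bᵀ, Aᵀ]]` built from negacirculant `A`, `B`. -/
def fourNegaM {n : ℕ} (a b : Fin n → ZMod 4) :
    (Fin n ⊕ Fin n) → (Fin n ⊕ Fin n) → ZMod 4
  | Sum.inl i, Sum.inl j => negaEntry a i j
  | Sum.inl i, Sum.inr j => negaEntry b i j
  | Sum.inr i, Sum.inl j => - negaEntry b j i
  | Sum.inr i, Sum.inr j => negaEntry a j i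

/-- Row `i` of the generator matrix `(I | M)` of a four-negacirculant code. -/
def fourNegaRow {n : ℕ} (a b : Fin n → ZMod 4) (i : Fin n ⊕ Fin n) :
    ((Fin n ⊕ Fin n) ⊕ (Fin n ⊕ Fin n)) → ZMod 4 :=
  Sum.elim (fun j => if j = i then 1 else 0) (fourNegaM a b i)

/-- The four-negacirculant code of length `4n`. -/
def fourNegaCode {n : ℕ} (a b : Fin n → ZMod 4) :
    Submodule (ZMod 4) (((Fin n ⊕ Fin n) ⊕ (Fin n ⊕ Fin n)) → ZMod 4) :=
  Submodule.span (ZMod 4) (Set.range (fourNegaRow a b))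

end Z4Note

open Matrix Polynomial

namespace Z4Note

variable {ι : Type*} [Fintype ι]

theorem eq_one_of_ne_zero_two {b : ZMod 2} (hb : b ≠ 0) : b = 1 := by
  revert b
  decide

theorem hWt_add_le (x y : ι → ZMod 2) : hWt (x + y) ≤ hWt x + hWt y := by
  classical
  refine (card_le_card fun i => ?_).trans (card_union_le _ _)
  simp only [mem_filter, mem_union, mem_univ, true_and, Pi.add_apply]
  contrapose!
  rintro ⟨hx, hy⟩
  rw [hx, hy, add_zero]

theorem hWt_single_one [DecidableEq ι] (i : ι) : hWt (Pi.single i (1 : ZMod 2)) = 1 := by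
  rw [hWt, card_eq_one]
  refine ⟨i, ?_⟩
  ext j
  by_cases h : j = i <;> simp [h]

theorem hWt_one : hWt (1 : ι → ZMod 2) = Fintype.card ι := by
  simp [hWt]

theorem cast_hWt_eq_sum (x : ι → ZMod 2) : (hWt x : ZMod 2) = ∑ i, x i := by
  rw [hWt, ← sum_filter_ne_zero,
    sum_congr rfl fun i hi => eq_one_of_ne_zero_two (mem_filter.1 hi).2]
  simp

theorem hWt_one_add (x : ι → ZMod 2) : hWt (1 + x) = Fintype.card ι - hWt x := by
  have hcompl : ∀ b : ZMod 2, 1 + b ≠ 0 ↔ b = 0 := by decide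
  simp only [hWt, Pi.add_apply, Pi.one_apply, hcompl]
  rw [← card_univ, ← card_filter_add_card_filter_not (s := univ) (fun i => x i = 0)]
  simp

def signChar : AddChar (ZMod 2) ℚ := AddChar.zmodChar 2 (by norm_num : (-1 : ℚ) ^ 2 = 1)

theorem signChar_one : signChar 1 = -1 := by
  simp [signChar, AddChar.zmodChar_apply, ZMod.val_one]

def charFun (z : ι → ZMod 2) (u : ι → ZMod 2) : ℚ := signChar (z ⬝ᵥ u)

theorem charFun_zero : charFun (0 : ι → ZMod 2) = 1 := by
  ext u
  simp [charFun]

theorem charFun_add (z z' : ι → ZMod 2) : charFun (z + z') = charFun z * charFun z' := by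
  ext u
  simp [charFun, add_dotProduct, AddChar.map_add_eq_mul]

theorem sum_signChar_dotProduct_eq_zero (D : Submodule (ZMod 2) (ι → ZMod 2)) [Fintype D]
    {y : ι → ZMod 2} (hy : y ∉ dual2 (D : Set (ι → ZMod 2))) :
    ∑ u : D, signChar (y ⬝ᵥ u) = 0 := by
  let dot : D →+ ZMod 2 :=
    (AddMonoidHom.mk' (y ⬝ᵥ ·) (dotProduct_add y)).comp D.subtype.toAddMonoidHom
  refine AddChar.sum_eq_zero_of_ne_one (ψ := signChar.compAddMonoidHom dot) ?_
  simp only [dual2, Set.mem_ofPred_eq, not_forall] at hy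
  obtain ⟨c, hc, hyc⟩ := hy
  refine AddChar.ne_one_iff.2 ⟨⟨c, hc⟩, ?_⟩
  have hyc1 : y ⬝ᵥ c = 1 := eq_one_of_ne_zero_two hyc
  norm_num [dot, hyc1, signChar_one]

variable (ι) in
/-- Functions on `ι → ZMod 2` whose Fourier transform is supported on vectors of weight `≤ s`. -/
def lowDegree (s : ℕ) : Submodule ℚ ((ι → ZMod 2) → ℚ) :=
  Submodule.span ℚ (charFun '' {z | hWt z ≤ s})

theorem charFun_mem_lowDegree {s : ℕ} {z : ι → ZMod 2} (hz : hWt z ≤ s) :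
    charFun z ∈ lowDegree ι s :=
  Submodule.subset_span ⟨z, hz, rfl⟩

theorem lowDegree_mono {s t : ℕ} (h : s ≤ t) : lowDegree ι s ≤ lowDegree ι t :=
  Submodule.span_mono (Set.image_mono fun _ hz => le_trans hz h)

theorem mul_mem_lowDegree {s t : ℕ} {f g : (ι → ZMod 2) → ℚ} (hf : f ∈ lowDegree ι s)
    (hg : g ∈ lowDegree ι t) : f * g ∈ lowDegree ι (s + t) := by
  have hfg := Submodule.mul_mem_mul hf hg
  rw [lowDegree, lowDegree, Submodule.span_mul_span] at hfg
  refine Submodule.span_mono ?_ hfg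
  rintro _ ⟨_, ⟨z, hz, rfl⟩, _, ⟨z', hz', rfl⟩, rfl⟩
  exact ⟨z + z', (hWt_add_le z z').trans (add_le_add hz hz'), charFun_add z z'⟩

theorem one_mem_lowDegree : (1 : (ι → ZMod 2) → ℚ) ∈ lowDegree ι 0 :=
  charFun_zero (ι := ι) ▸ charFun_mem_lowDegree (by simp [hWt])

theorem cast_hWt_mem_lowDegree : (fun u : ι → ZMod 2 => (hWt u : ℚ)) ∈ lowDegree ι 1 := by
  classical
  have hsign : ∀ b : ZMod 2, (if b = 0 then 0 else 1 : ℚ) = (1 - signChar b) / 2 := by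
    intro b
    by_cases hb : b = 0
    · simp [hb]
    · rw [if_neg hb, eq_one_of_ne_zero_two hb, signChar_one]
      norm_num
  have h : (fun u : ι → ZMod 2 => (hWt u : ℚ)) =
      ∑ i, (1 / 2 : ℚ) • (charFun 0 - charFun (Pi.single i 1)) := by
    ext u
    simp [hWt, card_filter, hsign, charFun, single_dotProduct, div_eq_inv_mul]
  rw [h]
  refine Submodule.sum_mem _ fun i _ => Submodule.smul_mem _ _ (Submodule.sub_mem _ ?_ ?_)
  · exact charFun_mem_lowDegree (by simp [hWt])
  · exact charFun_mem_lowDegree (hWt_single_one i).le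

theorem pow_mem_lowDegree {f : (ι → ZMod 2) → ℚ} (hf : f ∈ lowDegree ι 1) (n : ℕ) :
    f ^ n ∈ lowDegree ι n := by
  induction n with
  | zero => rw [pow_zero]; exact one_mem_lowDegree
  | succ n ih => rw [pow_succ]; exact mul_mem_lowDegree ih hf

theorem eval_hWt_mem_lowDegree (g : ℚ[X]) :
    (fun u : ι → ZMod 2 => g.eval (hWt u : ℚ)) ∈ lowDegree ι g.natDegree := by
  have h : (fun u : ι → ZMod 2 => g.eval (hWt u : ℚ)) =
      ∑ i ∈ range (g.natDegree + 1), g.coeff i • (fun u : ι → ZMod 2 => (hWt u : ℚ)) ^ i := by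
    ext u
    simp [eval_eq_sum_range]
  rw [h]
  refine Submodule.sum_mem _ fun i hi => Submodule.smul_mem _ _ ?_
  exact lowDegree_mono (Nat.lt_succ_iff.1 (mem_range.1 hi))
    (pow_mem_lowDegree cast_hWt_mem_lowDegree i)

theorem sum_signChar_mul_eq_zero (D : Submodule (ZMod 2) (ι → ZMod 2)) [Fintype D] {s : ℕ}
    {v : ι → ZMod 2} (hv : ∀ z, hWt z ≤ s → v + z ∉ dual2 (D : Set (ι → ZMod 2)))
    {f : (ι → ZMod 2) → ℚ} (hf : f ∈ lowDegree ι s) :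
    ∑ u : D, signChar (v ⬝ᵥ u) * f u = 0 := by
  induction hf using Submodule.span_induction with
  | mem _ h =>
    obtain ⟨z, hz, rfl⟩ := h
    simp only [charFun, ← AddChar.map_add_eq_mul, ← add_dotProduct]
    exact sum_signChar_dotProduct_eq_zero D (hv z hz)
  | zero => simp
  | add f g _ _ hf hg => simp [mul_add, sum_add_distrib, hf, hg]
  | smul a f _ hf => simp [mul_left_comm _ a, ← mul_sum, hf]

theorem exists_mem_dual2_hWt_sub_le_card (D : Submodule (ZMod 2) (ι → ZMod 2)) (W : Finset ℕ)
    (hW0 : 0 ∉ W) (hW : ∀ u ∈ D, u ≠ 0 → hWt u ∈ W) (v : ι → ZMod 2) :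
    ∃ c ∈ dual2 (D : Set (ι → ZMod 2)), hWt (v - c) ≤ W.card := by
  have : Fintype D := Fintype.ofFinite D
  by_contra! hfar
  have hv : ∀ z, hWt z ≤ W.card → v + z ∉ dual2 (D : Set (ι → ZMod 2)) := fun z hz hvz => by
    have hz' := hfar _ hvz
    rw [sub_add_cancel_left, ZModModule.neg_eq_self] at hz'
    omega
  set g : ℚ[X] := ∏ w ∈ W, (X - C (w : ℚ))
  have hg : g.natDegree = W.card := by
    rw [natDegree_prod_of_monic _ _ fun w _ => monic_X_sub_C _]
    simp only [natDegree_X_sub_C, sum_const, smul_eq_mul, mul_one]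
  have hg0 : g.eval 0 ≠ 0 := by
    simp only [g, eval_prod, eval_sub, eval_X, eval_C, zero_sub, prod_ne_zero_iff, neg_ne_zero]
    exact fun w hw h => hW0 (Nat.cast_eq_zero.1 h ▸ hw)
  have hsum := sum_signChar_mul_eq_zero D hv (hg ▸ eval_hWt_mem_lowDegree g)
  rw [sum_eq_single 0 (fun u _ hu => ?_) (by simp)] at hsum
  · exact hg0 (by simpa [hWt] using hsum)
  · refine mul_eq_zero_of_right _ ?_
    simp only [g, eval_prod, eval_sub, eval_X, eval_C]
    exact prod_eq_zero (hW u u.2 (by simpa using hu)) (sub_self _)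

theorem covRad_dual2_le_card (D : Submodule (ZMod 2) (ι → ZMod 2)) (W : Finset ℕ)
    (hW0 : 0 ∉ W) (hW : ∀ u ∈ D, u ≠ 0 → hWt u ∈ W) :
    covRad (dual2 (D : Set (ι → ZMod 2))) ≤ W.card :=
  Nat.sInf_le (exists_mem_dual2_hWt_sub_le_card D W hW0 hW)

theorem one_mem_dual2_of_even {C : Set (ι → ZMod 2)} (hC : ∀ x ∈ C, 2 ∣ hWt x) :
    (1 : ι → ZMod 2) ∈ dual2 C := fun x hx => by
  simpa [← cast_hWt_eq_sum] using (ZMod.natCast_eq_zero_iff _ 2).2 (hC x hx)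

theorem minHam_le_hWt {C : Set (ι → ZMod 2)} {x : ι → ZMod 2} (hx : x ∈ C) (hx0 : x ≠ 0) :
    minHam C ≤ hWt x :=
  Nat.sInf_le ⟨x, hx, hx0, rfl⟩

theorem hWt_eq_card_or_minHam_le (C : Submodule (ZMod 2) (ι → ZMod 2)) (hone : 1 ∈ C)
    {c : ι → ZMod 2} (hc : c ∈ C) (hc0 : c ≠ 0) :
    hWt c = Fintype.card ι ∨
      minHam (C : Set (ι → ZMod 2)) ≤ hWt c ∧
        minHam (C : Set (ι → ZMod 2)) ≤ Fintype.card ι - hWt c := by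
  by_cases hc1 : c = 1
  · exact .inl (hc1 ▸ hWt_one)
  refine .inr ⟨minHam_le_hWt hc hc0, hWt_one_add c ▸ minHam_le_hWt (C.add_mem hone hc) ?_⟩
  exact fun h => hc1 ((eq_neg_of_add_eq_zero_right h).trans (ZModModule.neg_eq_self 1))

end Z4Note

open Z4Note in
/-- a binary extremal doubly even self-dual code of length `24k` has
covering radius at most `4k`. -/
theorem covRad_le_of_extremal_length24k
    (k : ℕ) (hk : 0 < k)
    (C : Submodule (ZMod 2) (Fin (24 * k) → ZMod 2))
    (hsd : SelfDual2 C)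
    (hde : DoublyEven (C : Set (Fin (24 * k) → ZMod 2)))
    (hmin : minHam (C : Set (Fin (24 * k) → ZMod 2)) = 4 * k + 4) :
    covRad (C : Set (Fin (24 * k) → ZMod 2)) ≤ 4 * k := by
  have hone : (1 : Fin (24 * k) → ZMod 2) ∈ C := by
    rw [← SetLike.mem_coe, hsd]
    exact one_mem_dual2_of_even fun x hx => dvd_trans (by norm_num) (hde x hx)
  let W : Finset ℕ := insert (24 * k) ((Icc (k + 1) (5 * k - 1)).image (4 * ·))
  have hW : ∀ u ∈ C, u ≠ 0 → hWt u ∈ W := by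
    intro u hu hu0
    obtain ⟨t, ht⟩ := hde u hu
    rcases hWt_eq_card_or_minHam_le C hone hu hu0 with h | ⟨hlo, hhi⟩
    · simp [W, h]
    · simp only [W, mem_insert, mem_image, mem_Icc, Fintype.card_fin] at hhi ⊢
      exact .inr ⟨t, by omega, ht.symm⟩
  have hcard : W.card ≤ 4 * k := by
    refine (card_insert_le _ _).trans ?_
    have := (card_image_le (s := Icc (k + 1) (5 * k - 1)) (f := (4 * ·)))
    rw [Nat.card_Icc] at this
    omega
  rw [hsd]
  exact (covRad_dual2_le_card C W (by simp [W, hk.ne']) hW).trans hcard
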